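/- Let C be a finite poset such that for every n ≤ |C|, any two downward-closed subsets of cardinality n are order-isomorphic. Then C is Newtonian: for all x, y in C, if L(x) > L(y) then y ≺ x, where L denotes level. -/

import Mathlib

/-!
Suppose `level y < level x` but not `y < x`. The stem `S = Iic x ∪ {z | level z ≤ level y}` has
both `x` and `y` as maximal elements, so `S \ {x}` and `S \ {y}` are stems of the same size.
The second still contains the whole past of `x`, so its height is at least `level x`, while every
element of the first has level below `level x`, so its height is smaller: they cannot be
isomorphic.
-/

/-- The level of `x`: the cardinality of the longest chain with maximal element `x`. -/
noncomputable def level {α : Type*} [PartialOrder α] (x : α) : ℕ∞ :=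
  Set.chainHeight {y | y ≤ x} (· < ·)

lemma Set.chainHeight_eq_of_orderIso {α β : Type*} [Preorder α] [Preorder β] {S : Set α}
    {T : Set β} (e : S ≃o T) : S.chainHeight (· < ·) = T.chainHeight (· < ·) := by
  simpa [e.toRelIsoLT.surjective.range_eq] using
    (Set.chainHeight_eq_of_relIso (Set.univ : Set S) e.toRelIsoLT).symm

section Level

variable {α : Type*} [PartialOrder α]

lemma level_mono : Monotone (level : α → ℕ∞) := fun _ _ hxy =>
  Set.chainHeight_mono _ _ _ fun _ hz => le_trans hz hxy

lemma level_lt_level_of_lt {x y : α} (hxy : x < y) (hx : level x ≠ ⊤) : level x < level y := by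
  obtain ⟨t, hts, ht, htc⟩ := Set.exists_eq_chainHeight_of_chainHeight_ne_top _ _ hx
  have hyt : y ∉ t := fun hy => (hts hy).not_gt hxy
  have hchain : IsChain (· < ·) (insert y t) :=
    htc.insert fun b hb _ => Or.inr ((hts hb).trans_lt hxy)
  have hsub : insert y t ⊆ {z | z ≤ y} := Set.insert_subset le_rfl fun z hz => (hts hz).trans hxy.le
  have hle : level x + 1 ≤ level y := by
    simpa [Set.encard_insert_of_notMem hyt, ht, level] using
      Set.encard_le_chainHeight_of_isChain _ _ hsub hchain
  exact (ENat.add_one_le_iff hx).mp hle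

lemma level_strictMono [Finite α] : StrictMono (level : α → ℕ∞) := fun _ _ hxy =>
  level_lt_level_of_lt hxy (Set.chainHeight_ne_top_of_finite _ _ (Set.toFinite _))

lemma isLowerSet_setOf_level_le (n : ℕ∞) : IsLowerSet {z : α | level z ≤ n} :=
  (isLowerSet_Iic n).preimage level_mono

lemma IsChain.encard_le_level {t : Set α} (hc : IsChain (· < ·) t) {g : α}
    (hg : Maximal (· ∈ t) g) : t.encard ≤ level g :=
  Set.encard_le_chainHeight_of_isChain _ _
    (fun _ hz => ((hc.mono_rel fun _ _ => le_of_lt).total hz hg.1).elim id (hg.2 hz)) hc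

lemma chainHeight_lt_of_forall_level_lt {s : Set α} (hs : s.Finite) {n : ℕ∞} (hn : 0 < n)
    (h : ∀ z ∈ s, level z < n) : s.chainHeight (· < ·) < n := by
  obtain ⟨t, hts, ht, htc⟩ := Set.exists_eq_chainHeight_of_finite s _ hs
  rw [← ht]
  rcases t.eq_empty_or_nonempty with rfl | hne
  · simpa using hn
  obtain ⟨g, hg⟩ := (hs.subset hts).exists_maximal hne
  exact (htc.encard_le_level hg).trans_lt (h g (hts hg.1))

end Level

/-- If in a finite poset any two downward-closed subsets of the same
cardinality `n ≤ |C|` are order-isomorphic, then the poset is Newtonian. -/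
theorem stems_iso_implies_newtonian
    {α : Type} [PartialOrder α] [Fintype α]
    (h : ∀ n : ℕ, n ≤ Fintype.card α →
      ∀ S T : Set α, IsLowerSet S → IsLowerSet T →
        S.ncard = n → T.ncard = n → Nonempty (S ≃o T)) :
    ∀ x y : α, level y < level x → y < x := by
  intro x y hlt
  by_contra hyx
  have hy_not_le : ¬ y ≤ x := fun hle => hyx (hle.lt_of_ne (by rintro rfl; exact hlt.false))
  set S := Set.Iic x ∪ {z | level z ≤ level y}
  have hS : IsLowerSet S := (isLowerSet_Iic x).union (isLowerSet_setOf_level_le _)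
  have hx_max : ∀ b ∈ S, x ≤ b → b = x := by
    rintro b (hb | hb) hxb
    · exact le_antisymm hb hxb
    · exact absurd ((level_mono hxb).trans hb) hlt.not_ge
  have hy_max : ∀ b ∈ S, y ≤ b → b = y := by
    rintro b (hb | hb) hyb
    · exact absurd (hyb.trans hb) hy_not_le
    · exact (eq_of_le_of_not_lt hyb fun h => (level_strictMono h).not_ge hb).symm
  have hcard : (S \ {x}).ncard = (S \ {y}).ncard := by
    rw [Set.ncard_sdiff_singleton_of_mem (show x ∈ S from Or.inl le_rfl),
      Set.ncard_sdiff_singleton_of_mem (show y ∈ S from Or.inr (le_refl (level y)))]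
  obtain ⟨e⟩ := h _ (Nat.card_eq_fintype_card (α := α) ▸ Set.ncard_le_card _) _ _
    (hS.erase hx_max) (hS.erase hy_max) rfl hcard.symm
  have h_past : level x ≤ (S \ {y}).chainHeight (· < ·) :=
    Set.chainHeight_mono _ _ _ fun z hz => ⟨Or.inl hz, fun hzy => hy_not_le (hzy ▸ hz)⟩
  have h_low : (S \ {x}).chainHeight (· < ·) < level x :=
    chainHeight_lt_of_forall_level_lt (Set.toFinite _) (pos_of_gt hlt) fun z ⟨hz, hzx⟩ =>
      hz.elim (fun hzx' => level_strictMono (lt_of_le_of_ne hzx' hzx)) (·.trans_lt hlt)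
  exact (h_past.trans_lt (Set.chainHeight_eq_of_orderIso e ▸ h_low)).false
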